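/- Let T be a finite tree rooted at vertex v, whose edges are hypercube edges (each edge connects s and s¬i for some coordinate i), with vertex set contained in {0,1}^n. Then there exists an assignment of values d_i(s) to the edges (with d_i(s¬i) = −d_i(s)) such that for every non-root vertex s of T, the sum over edges of T incident to s of d evaluated at s equals −1. -/

import Mathlib

/-!
Send one unit of flow from every vertex of `T` to the root `v` along a walk in `T`, and let
`d_i(s)` be the net number of times these walks traverse the edge from `s¬i` to `s`. Along a
single walk the flow is conserved at every vertex other than its two endpoints, so at a
non-root vertex `s` the net inflow is `-1`: the unit emitted by `s` itself.
-/

/-- Flip coordinate `i` of a vertex of the hypercube `{0,1}^n`. -/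
def flipAt (n : ℕ) (s : Fin n → Bool) (i : Fin n) : Fin n → Bool :=
  Function.update s i (!(s i))

/-- The `n`-dimensional hypercube graph on `{0,1}^n`: two vertices are
adjacent iff they differ in exactly one coordinate. -/
def cube (n : ℕ) : SimpleGraph (Fin n → Bool) :=
  SimpleGraph.fromRel (fun s t => ∃ i, t = flipAt n s i)

/-- `C` is a connected component of the induced subgraph of the hypercube on `A`:
a maximal connected subset of `A`. -/
def IsCompOf (n : ℕ) (A C : Set (Fin n → Bool)) : Prop :=
  C.Nonempty ∧ C ⊆ A ∧ ((cube n).induce C).Connected ∧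
    ∀ D, C ⊆ D → D ⊆ A → ((cube n).induce D).Connected → D = C

open Finset

namespace SimpleGraph.Walk

variable {V : Type*} [DecidableEq V] {G : SimpleGraph V}

def netFlow {a b : V} (p : G.Walk a b) (x y : V) : ℤ :=
  (p.darts.map Dart.toProd).count (x, y) - (p.darts.map Dart.toProd).count (y, x)

theorem netFlow_swap {a b : V} (p : G.Walk a b) (x y : V) : p.netFlow y x = -p.netFlow x y := by
  rw [netFlow, netFlow, neg_sub]

theorem sum_netFlow_neighborFinset [G.LocallyFinite] {a b : V} (p : G.Walk a b) (c : V) :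
    ∑ y ∈ G.neighborFinset c, p.netFlow y c =
      (if b = c then 1 else 0) - (if a = c then 1 else 0) := by
  induction p with
  | nil => simp [netFlow]
  | @cons a a' b h p ih =>
    have hin : ∑ y ∈ G.neighborFinset c, (if (a, a') = (y, c) then 1 else 0 : ℤ) =
        if a' = c then 1 else 0 := by
      by_cases ha' : a' = c
      · subst ha'; simp [h.symm]
      · simp [ha']
    have hout : ∑ y ∈ G.neighborFinset c, (if (a, a') = (c, y) then 1 else 0 : ℤ) =
        if a = c then 1 else 0 := by
      by_cases ha : a = c
      · subst ha; simp [h]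
      · simp [ha]
    simp only [netFlow, darts_cons, List.map_cons, List.count_cons, beq_iff_eq, Nat.cast_add,
      Nat.cast_ite, Nat.cast_one, Nat.cast_zero] at ih ⊢
    simp only [add_sub_add_comm, sum_add_distrib, ih, sum_sub_distrib, hin, hout]
    ring

end SimpleGraph.Walk

namespace SimpleGraph.Subgraph

variable {V : Type*} {G : SimpleGraph V} {H : G.Subgraph}

theorem Connected.reachable_spanningCoe (hH : H.Connected) {u v : V} (hu : u ∈ H.verts)
    (hv : v ∈ H.verts) : H.spanningCoe.Reachable u v :=
  (hH ⟨u, hu⟩ ⟨v, hv⟩).map ⟨Subtype.val, id⟩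

theorem Connected.exists_flow_to [Fintype V] [H.spanningCoe.LocallyFinite] (hH : H.Connected)
    {v : V} (hv : v ∈ H.verts) :
    ∃ f : V → V → ℤ, (∀ x y, f y x = -f x y) ∧
      ∀ s ∈ H.verts, s ≠ v → ∑ t ∈ H.spanningCoe.neighborFinset s, f t s = -1 := by
  classical
  let p (w : H.verts) : H.spanningCoe.Walk w v := (hH.reachable_spanningCoe w.2 hv).some
  refine ⟨fun x y => ∑ w, (p w).netFlow x y, fun x y => ?_, fun s hs hsv => ?_⟩
  · rw [← sum_neg_distrib]
    exact sum_congr rfl fun w _ => (p w).netFlow_swap x y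
  · rw [sum_comm]
    have hpt (w : H.verts) : (w : V) = s ↔ w = ⟨s, hs⟩ :=
      (Subtype.ext_iff (a2 := ⟨s, hs⟩)).symm
    simp [Walk.sum_netFlow_neighborFinset, Ne.symm hsv, hpt]

end SimpleGraph.Subgraph

theorem flipAt_flipAt (n : ℕ) (s : Fin n → Bool) (i : Fin n) :
    flipAt n (flipAt n s i) i = s := by
  simp [flipAt]

theorem flipAt_injective (n : ℕ) (s : Fin n → Bool) : Function.Injective (flipAt n s) := by
  intro i j h
  by_contra hij
  simpa [flipAt, Function.update_apply, hij] using congrFun h i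

theorem exists_eq_flipAt_of_cube_adj {n : ℕ} {s t : Fin n → Bool} (h : (cube n).Adj s t) :
    ∃ i, t = flipAt n s i := by
  obtain ⟨-, h | ⟨i, rfl⟩⟩ := (SimpleGraph.fromRel_adj _ _ _).mp h
  · exact h
  · exact ⟨i, (flipAt_flipAt n t i).symm⟩

open Classical in
theorem sum_filter_adj_flipAt {M : Type*} [AddCommMonoid M] (n : ℕ) (H : (cube n).Subgraph)
    (s : Fin n → Bool) (f : (Fin n → Bool) → M) :
    ∑ i ∈ univ.filter (fun i => H.Adj s (flipAt n s i)), f (flipAt n s i) =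
      ∑ t ∈ H.spanningCoe.neighborFinset s, f t := by
  rw [← sum_image fun i _ j _ h => flipAt_injective n s h]
  congr 1
  ext t
  simp only [mem_image, mem_filter, mem_univ, true_and, SimpleGraph.mem_neighborFinset,
    SimpleGraph.Subgraph.spanningCoe_adj]
  constructor
  · rintro ⟨i, hi, rfl⟩
    exact hi
  · intro ht
    obtain ⟨i, rfl⟩ := exists_eq_flipAt_of_cube_adj (H.adj_sub ht)
    exact ⟨i, ht, rfl⟩

open Classical in
/-- On a finite tree `T` of hypercube edges rooted at `v` one can assign antisymmetric
edge values `d` so that at every non-root vertex the signed sum of incident tree-edge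
values equals `−1`. -/
theorem stmt8 (n : ℕ) (H : (cube n).Subgraph) (hT : H.coe.IsTree)
    (v : Fin n → Bool) (hv : v ∈ H.verts) :
    ∃ d : (Fin n → Bool) → Fin n → ℝ,
      (∀ (s : Fin n → Bool) (i : Fin n), d (flipAt n s i) i = - d s i) ∧
      ∀ s ∈ H.verts, s ≠ v →
        (∑ i ∈ Finset.univ.filter (fun i : Fin n => H.Adj s (flipAt n s i)), d s i) = -1 := by
  obtain ⟨f, hf_swap, hf_sum⟩ :=
    (SimpleGraph.Subgraph.Connected.mk hT.connected).exists_flow_to hv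
  refine ⟨fun s i => f (flipAt n s i) s, fun s i => ?_, fun s hs hsv => ?_⟩
  · simp only [flipAt_flipAt, hf_swap (flipAt n s i), Int.cast_neg]
  · rw [sum_filter_adj_flipAt n H s (fun t => (f t s : ℝ))]
    exact_mod_cast hf_sum s hs hsv
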